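/- arXiv:2512.00195 — 2 statements merged into one kernel-verified Lean document; each statement's English description precedes it below -/
import Mathlib

section
/- Let $g : S^1 \to S^1$ be an orientation-preserving homeomorphism with lift $\widetilde{g}$ satisfying $x < \widetilde{g}(x) < x + 1$ for all $x$, let $\nu$ be a probability measure on $S^1$ with lift $\widetilde{\nu}$, and let $m'$ be a probability measure on $\mathbb{R}$ supported on $[0,1]$. Then for every $n \ge 1$, $\big| \Phi_{\nu}(m', (\widetilde{g}^n)_* m') - (\widetilde{g}^n(0) - 0) \big| \le 2$, where $\Phi_{\nu}(m_1, m_2) = \int (m_1((-\infty,y]) - m_2((-\infty,y])) \, d\widetilde{\nu}(y)$. -/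
open MeasureTheory Set Filter Topology

noncomputable section

/-- `νL` is the infinite-mass lift of the measure `ν` on the circle:
translation-by-1 invariant, and its restriction to `[0,1)` projects to `ν`. -/
def IsLift (ν : Measure UnitAddCircle) (νL : Measure ℝ) : Prop :=
  (∀ s : Set ℝ, νL ((· + 1) ⁻¹' s) = νL s) ∧
    Measure.map (fun x : ℝ => (x : UnitAddCircle)) (νL.restrict (Ico (0:ℝ) 1)) = ν
/-- Signed shift of `m₂` relative to `m₁`, measured with the lifted measure `νL`. -/
def PhiM (νL : Measure ℝ) (m₁ m₂ : Measure ℝ) : ℝ :=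
  ∫ y, ((m₁ (Iic y)).toReal - (m₂ (Iic y)).toReal) ∂νL

/-! Write `F y = m'(-∞, y] - ((g̃ⁿ)_* m')(-∞, y]` and `a = g̃ⁿ(0)`. Since
`x ≤ g̃ⁿ x`, `0 ≤ F ≤ 1`; since `m'` lives on `[0,1]` and `g̃ⁿ` is monotone with
`g̃ⁿ(1) = a + 1`, the pushforward lives on `[a, a+1]`. Hence `F` vanishes off `[0, a+1)` and
equals `1` on `[1, a)`. As `ν̃` gives mass `N` to every interval `[k, k+N)` with integer ends,
`∫ F dν̃` is at most `⌈a + 1⌉` and, when `a > 1`, at least `⌊a - 1⌋`; both are within `2` of `a`. -/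

lemma IsLift.measure_Ico_zero_one {ν : Measure UnitAddCircle} [IsProbabilityMeasure ν]
    {νL : Measure ℝ} (h : IsLift ν νL) : νL (Ico 0 1) = 1 := by
  have := congrArg (fun μ : Measure UnitAddCircle => μ univ) h.2
  simpa [Measure.map_apply AddCircle.measurable_mk' MeasurableSet.univ] using this

section IntegerIntervals

variable {νL : Measure ℝ} (hinv : ∀ s : Set ℝ, νL ((· + 1) ⁻¹' s) = νL s)
include hinv

lemma measure_Ico_add_one (x y : ℝ) : νL (Ico (x + 1) (y + 1)) = νL (Ico x y) := by
  rw [← hinv, preimage_add_const_Ico, add_sub_cancel_right, add_sub_cancel_right]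

lemma measure_Ico_nat_add_one (h01 : νL (Ico 0 1) = 1) (k : ℕ) :
    νL (Ico (k : ℝ) (k + 1)) = 1 := by
  induction k with
  | zero => simpa using h01
  | succ k ih => push_cast; rw [measure_Ico_add_one hinv, ih]

lemma measure_Ico_nat_add_nat (h01 : νL (Ico 0 1) = 1) (k N : ℕ) :
    νL (Ico (k : ℝ) (k + N)) = N := by
  induction N with
  | zero => simp
  | succ N ih =>
    have hsplit : Ico (k : ℝ) (k + (N + 1 : ℕ)) = Ico (k : ℝ) (k + N) ∪ Ico ((k + N : ℕ) : ℝ)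
        ((k + N : ℕ) + 1) := by
      push_cast
      rw [← add_assoc, Ico_union_Ico_eq_Ico (by simp) (by linarith)]
    rw [hsplit, measure_union (Ico_disjoint_Ico_same.mono_right (by push_cast; rfl))
      measurableSet_Ico, ih, measure_Ico_nat_add_one hinv h01]
    push_cast; rfl

end IntegerIntervals

section IndicatorBounds

variable {X : Type*} [MeasurableSpace X] {μ : Measure X} {s : Set X} {f : X → ℝ}

lemma integrable_of_le_indicator_one (hs : MeasurableSet s) (hμs : μ s ≠ ⊤)
    (hf : AEStronglyMeasurable f μ) (h0 : 0 ≤ f) (hle : f ≤ s.indicator 1) :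
    Integrable f μ :=
  ((integrable_indicator_iff hs).2 (integrableOn_const (C := (1 : ℝ)) hμs)).mono' hf
    (ae_of_all _ fun x => by rw [Real.norm_eq_abs, abs_of_nonneg (h0 x)]; exact hle x)

lemma integral_le_measureReal_of_le_indicator_one (hs : MeasurableSet s) (hμs : μ s ≠ ⊤)
    (hf : Integrable f μ) (hle : f ≤ s.indicator 1) : ∫ x, f x ∂μ ≤ μ.real s := by
  rw [← integral_indicator_one hs]
  exact integral_mono hf ((integrable_indicator_iff hs).2 (integrableOn_const (C := (1 : ℝ)) hμs)) hle

lemma measureReal_le_integral_of_indicator_one_le (hs : MeasurableSet s) (hμs : μ s ≠ ⊤)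
    (hf : Integrable f μ) (hle : s.indicator 1 ≤ f) : μ.real s ≤ ∫ x, f x ∂μ := by
  rw [← integral_indicator_one hs]
  exact integral_mono ((integrable_indicator_iff hs).2 (integrableOn_const (C := (1 : ℝ)) hμs)) hf hle

end IndicatorBounds

section DistributionFunctions

variable {μ : Measure ℝ} {p q y : ℝ}

lemma measure_Iic_eq_zero_of_lt (hsupp : μ (Icc p q)ᶜ = 0) (hy : y < p) : μ (Iic y) = 0 :=
  measure_mono_null (fun x (hx : x ≤ y) (hx' : x ∈ Icc p q) => (hy.trans_le hx'.1).not_ge hx) hsupp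

lemma measure_Iic_eq_one_of_le [IsProbabilityMeasure μ] (hsupp : μ (Icc p q)ᶜ = 0)
    (hy : q ≤ y) : μ (Iic y) = 1 :=
  (prob_compl_eq_zero_iff measurableSet_Iic).1 <|
    measure_mono_null (fun x (hx : ¬x ≤ y) (hx' : x ∈ Icc p q) => hx (hx'.2.trans hy)) hsupp

lemma measurable_measure_Iic_toReal [IsFiniteMeasure μ] :
    Measurable fun y => (μ (Iic y)).toReal :=
  Monotone.measurable fun _ _ hxy =>
    ENNReal.toReal_mono (measure_ne_top _ _) (measure_mono (Iic_subset_Iic.2 hxy))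

variable {G : ℝ → ℝ} (hG : Monotone G)
include hG

lemma map_compl_Icc_eq_zero (hsupp : μ (Icc p q)ᶜ = 0) : μ.map G (Icc (G p) (G q))ᶜ = 0 := by
  rw [Measure.map_apply hG.measurable measurableSet_Icc.compl]
  exact measure_mono_null (compl_subset_compl.2 hG.mapsTo_Icc) hsupp

variable [IsProbabilityMeasure μ] (hle : ∀ x, x ≤ G x)
include hle

lemma cdf_sub_cdf_map_nonneg (y : ℝ) :
    0 ≤ (μ (Iic y)).toReal - (μ.map G (Iic y)).toReal := by
  rw [sub_nonneg, Measure.map_apply hG.measurable measurableSet_Iic]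
  exact ENNReal.toReal_mono (measure_ne_top _ _)
    (measure_mono fun x (hx : G x ≤ y) => (hle x).trans hx)

lemma cdf_sub_cdf_map_le_indicator (hsupp : μ (Icc p q)ᶜ = 0) :
    (fun y => (μ (Iic y)).toReal - (μ.map G (Iic y)).toReal) ≤ (Ico p (G q)).indicator 1 := by
  have : IsProbabilityMeasure (μ.map G) := Measure.isProbabilityMeasure_map hG.measurable.aemeasurable
  intro y
  by_cases hy : y ∈ Ico p (G q)
  · rw [indicator_of_mem hy, Pi.one_apply]
    linarith [measureReal_le_one (μ := μ) (s := Iic y), measureReal_nonneg (μ := μ.map G) (s := Iic y),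
      measureReal_def μ (Iic y), measureReal_def (μ.map G) (Iic y)]
  · rw [indicator_of_notMem hy]
    dsimp only
    rcases not_and_or.1 hy with hy | hy
    · rw [measure_Iic_eq_zero_of_lt hsupp (not_le.1 hy),
        measure_Iic_eq_zero_of_lt (map_compl_Icc_eq_zero hG hsupp) ((not_le.1 hy).trans_le (hle p))]
      simp
    · rw [measure_Iic_eq_one_of_le hsupp ((hle q).trans (not_lt.1 hy)),
        measure_Iic_eq_one_of_le (map_compl_Icc_eq_zero hG hsupp) (not_lt.1 hy)]
      simp

lemma indicator_le_cdf_sub_cdf_map (hsupp : μ (Icc p q)ᶜ = 0) :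
    (Ico q (G p)).indicator 1 ≤ fun y => (μ (Iic y)).toReal - (μ.map G (Iic y)).toReal := by
  intro y
  by_cases hy : y ∈ Ico q (G p)
  · dsimp only
    rw [indicator_of_mem hy, measure_Iic_eq_one_of_le hsupp hy.1,
      measure_Iic_eq_zero_of_lt (map_compl_Icc_eq_zero hG hsupp) hy.2]
    simp
  · rw [indicator_of_notMem hy]
    exact cdf_sub_cdf_map_nonneg hG hle y

end DistributionFunctions

theorem abs_phiM_map_sub_le {νL : Measure ℝ} (hinv : ∀ s : Set ℝ, νL ((· + 1) ⁻¹' s) = νL s)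
    (h01 : νL (Ico 0 1) = 1) {G : ℝ → ℝ} (hG : Monotone G) (hle : ∀ x, x ≤ G x)
    (hG1 : G 1 = G 0 + 1) (μ : Measure ℝ) [IsProbabilityMeasure μ]
    (hsupp : μ (Icc 0 1)ᶜ = 0) : |PhiM νL μ (μ.map G) - G 0| ≤ 2 := by
  set a := G 0
  set F := fun y => (μ (Iic y)).toReal - (μ.map G (Iic y)).toReal
  have hPhi : PhiM νL μ (μ.map G) = ∫ y, F y ∂νL := rfl
  have hF0 : 0 ≤ F := cdf_sub_cdf_map_nonneg hG hle
  set N := ⌈a + 1⌉₊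
  have hνN : νL (Ico 0 N) = N := by simpa using measure_Ico_nat_add_nat hinv h01 0 N
  have hupper : F ≤ (Ico (0 : ℝ) N).indicator 1 :=
    (cdf_sub_cdf_map_le_indicator hG hle hsupp).trans <| indicator_le_indicator_of_subset
      (Ico_subset_Ico_right (hG1 ▸ Nat.le_ceil _)) fun _ => zero_le_one
  have hFint : Integrable F νL :=
    integrable_of_le_indicator_one measurableSet_Ico (by simp [hνN])
      ((measurable_measure_Iic_toReal.sub measurable_measure_Iic_toReal).aestronglyMeasurable)
      hF0 hupper
  have h_le : ∫ y, F y ∂νL ≤ a + 2 := calc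
    ∫ y, F y ∂νL ≤ νL.real (Ico 0 N) :=
      integral_le_measureReal_of_le_indicator_one measurableSet_Ico (by simp [hνN]) hFint hupper
    _ = N := by simp [measureReal_def, hνN]
    _ ≤ a + 2 := by linarith [Nat.ceil_lt_add_one (by linarith [hle 0] : 0 ≤ a + 1)]
  have h_ge : a - 2 ≤ ∫ y, F y ∂νL := by
    rcases le_or_gt a 1 with ha | ha
    · linarith [integral_nonneg (μ := νL) hF0]
    set M := ⌊a - 1⌋₊
    have hνM : νL (Ico 1 (1 + M)) = M := by simpa using measure_Ico_nat_add_nat hinv h01 1 M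
    have hlower : (Ico (1 : ℝ) (1 + M)).indicator 1 ≤ F :=
      (indicator_le_indicator_of_subset (Ico_subset_Ico_right
        (by linarith [Nat.floor_le (by linarith : 0 ≤ a - 1)])) fun _ => zero_le_one).trans
        (indicator_le_cdf_sub_cdf_map hG hle hsupp)
    calc a - 2 ≤ M := by linarith [Nat.lt_floor_add_one (a - 1)]
      _ = νL.real (Ico 1 (1 + M)) := by simp [measureReal_def, hνM]
      _ ≤ ∫ y, F y ∂νL :=
        measureReal_le_integral_of_indicator_one_le measurableSet_Ico (by simp [hνM]) hFint hlower
  rw [hPhi, abs_le]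
  constructor <;> linarith

theorem stmt11_general (ν : Measure UnitAddCircle) [IsProbabilityMeasure ν]
    (νL : Measure ℝ) (h : IsLift ν νL)
    (gL : ℝ → ℝ) (hmono : StrictMono gL)
    (hper : ∀ y : ℝ, gL (y + 1) = gL y + 1)
    (hnofix : ∀ x : ℝ, x < gL x ∧ gL x < x + 1)
    (m' : Measure ℝ) [IsProbabilityMeasure m'] (hsupp : m' (Icc (0:ℝ) 1)ᶜ = 0) :
    ∀ n : ℕ, 1 ≤ n →
      |PhiM νL m' (m'.map (gL^[n])) - (gL^[n] 0 - 0)| ≤ 2 := by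
  intro n _
  have hcomm : Function.Commute gL (· + 1) := hper
  rw [sub_zero]
  exact abs_phiM_map_sub_le h.1 h.measure_Ico_zero_one (hmono.monotone.iterate n)
    (Function.id_le_iterate_of_id_le (fun x => (hnofix x).1.le) n)
    (by simpa using hcomm.iterate_left n 0) m' hsupp

theorem stmt11 (ν : Measure UnitAddCircle) [IsProbabilityMeasure ν]
    (νL : Measure ℝ) (h : IsLift ν νL)
    (gL : ℝ → ℝ) (hmono : StrictMono gL) (hcont : Continuous gL)
    (hper : ∀ y : ℝ, gL (y + 1) = gL y + 1)
    (hnofix : ∀ x : ℝ, x < gL x ∧ gL x < x + 1)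
    (m' : Measure ℝ) [IsProbabilityMeasure m'] (hsupp : m' (Icc (0:ℝ) 1)ᶜ = 0) :
    ∀ n : ℕ, 1 ≤ n →
      |PhiM νL m' (m'.map (gL^[n])) - (gL^[n] 0 - 0)| ≤ 2 :=
  stmt11_general ν νL h gL hmono hper hnofix m' hsupp
end
end

section
/- Let $\widetilde{g}$ be a lift of an orientation-preserving circle homeomorphism and suppose the limit $\rho = \lim_{n\to\infty} (\widetilde{g}^n(0))/n$ exists. Let $\nu$ be a $g$-invariant probability measure on $S^1$ with lift $\widetilde{\nu}$, and suppose $\widetilde{g}(x) > x$ for all $x$. Then $\widetilde{\nu}([x, \widetilde{g}(x))) = \rho$ for every $x \in \mathbb{R}$. -/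
/-!
Let `Φ` be the distribution function of `νL`, so that `Φ y - Φ x = νL [x, y)` for `x ≤ y`.
Since every unit interval has `νL`-mass one, `Φ (x + 1) = Φ x + 1`, so `Φ` is itself the lift of
a degree one circle map. Invariance of `ν` under `g` gives `νL [gL x, gL y) = νL [x, y)`, i.e.
`Φ ∘ gL - Φ` is a constant `c = νL [x, gL x)`. Thus `Φ` semiconjugates `gL` to the translation
by `c`, and since translation numbers are invariant under semiconjugacy, `ρ = τ gL = c`.
-/

open MeasureTheory Set Filter Topology

noncomputable section

namespace UnitAddCircle

theorem coe_add_intCast (x : ℝ) (n : ℤ) : ((x + n : ℝ) : UnitAddCircle) = x := by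
  rw [AddCircle.coe_add, add_eq_left, AddCircle.coe_eq_zero_iff]
  exact ⟨n, by simp⟩

theorem coe_mem_image_coe_iff {s : Set ℝ} {t : ℝ} :
    (t : UnitAddCircle) ∈ ((↑) : ℝ → UnitAddCircle) '' s ↔ ∃ n : ℤ, t + n ∈ s := by
  constructor
  · rintro ⟨y, hy, hyt⟩
    rw [← sub_eq_zero, ← AddCircle.coe_sub, AddCircle.coe_eq_zero_iff] at hyt
    obtain ⟨n, hn⟩ := hyt
    exact ⟨n, by simp_all⟩
  · rintro ⟨n, hn⟩
    exact ⟨t + n, hn, coe_add_intCast t n⟩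

theorem measurableSet_image_coe_Ico (a b : ℝ) :
    MeasurableSet (((↑) : ℝ → UnitAddCircle) '' Ico a b) := by
  rcases le_or_gt b a with hba | hab
  · simp [Ico_eq_empty_of_le hba]
  · rw [← Ioo_insert_left hab, image_insert_eq]
    exact (QuotientAddGroup.isOpenMap_coe _ isOpen_Ioo).measurableSet.insert _

theorem preimage_image_coe_Ico_inter_Ico {a b : ℝ} (hb : b ≤ a + 1) :
    ((↑) : ℝ → UnitAddCircle) ⁻¹' ((↑) '' Ico a b) ∩ Ico a (a + 1) = Ico a b := by
  refine Subset.antisymm ?_ fun x hx ↦ ⟨mem_image_of_mem _ hx, hx.1, hx.2.trans_le hb⟩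
  rintro x ⟨⟨y, hy, hyx⟩, hx⟩
  rwa [← (AddCircle.coe_eq_coe_iff_of_mem_Ico (p := 1) ⟨hy.1, hy.2.trans_le hb⟩ hx).mp hyx]

theorem preimage_image_coe_Ico_of_semiconj {f : CircleDeg1Lift} (hf : StrictMono f)
    {g : UnitAddCircle → UnitAddCircle} (hfg : Function.Semiconj ((↑) : ℝ → UnitAddCircle) f g)
    (a b : ℝ) : g ⁻¹' ((↑) '' Ico (f a) (f b)) = (↑) '' Ico a b := by
  ext z
  obtain ⟨t, rfl⟩ := QuotientAddGroup.mk_surjective z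
  simp only [mem_preimage, ← hfg t, coe_mem_image_coe_iff, ← f.map_add_int, mem_Ico,
    hf.le_iff_le, hf.lt_iff_lt]

end UnitAddCircle

section IcoAdditivity

variable {α : Type*} [LinearOrder α] [TopologicalSpace α] [OrderClosedTopology α]
  [MeasurableSpace α] [OpensMeasurableSpace α] {μ : Measure α} {a b c : α}

theorem measure_inter_Ico_add_measure_inter_Ico (A : Set α) (hab : a ≤ b) (hbc : b ≤ c) :
    μ (A ∩ Ico a b) + μ (A ∩ Ico b c) = μ (A ∩ Ico a c) := by
  rw [← measure_inter_add_sdiff (A ∩ Ico a c) (measurableSet_Iio (a := b)), inter_assoc,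
    inter_sdiff_assoc, Ico_inter_Iio, Ico_sdiff_Iio, min_eq_right hbc, max_eq_right hab]

theorem measure_Ico_add_measure_Ico (hab : a ≤ b) (hbc : b ≤ c) :
    μ (Ico a b) + μ (Ico b c) = μ (Ico a c) := by
  simpa using measure_inter_Ico_add_measure_inter_Ico (μ := μ) univ hab hbc

end IcoAdditivity

namespace MeasureTheory.Measure

def icoCdf (μ : Measure ℝ) (y : ℝ) : ℝ := μ.real (Ico 0 y) - μ.real (Ico y 0)

variable {μ : Measure ℝ} [IsLocallyFiniteMeasure μ]

theorem measureReal_Ico_add_measureReal_Ico {a b c : ℝ} (hab : a ≤ b) (hbc : b ≤ c) :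
    μ.real (Ico a b) + μ.real (Ico b c) = μ.real (Ico a c) := by
  rw [← Ico_union_Ico_eq_Ico hab hbc, measureReal_union Ico_disjoint_Ico_same measurableSet_Ico
    measure_Ico_lt_top.ne measure_Ico_lt_top.ne]

theorem icoCdf_sub_icoCdf {x y : ℝ} (hxy : x ≤ y) :
    μ.icoCdf y - μ.icoCdf x = μ.real (Ico x y) := by
  simp only [icoCdf]
  rcases le_total 0 x with hx | hx
  · rw [Ico_eq_empty_of_le hx, Ico_eq_empty_of_le (hx.trans hxy),
      ← measureReal_Ico_add_measureReal_Ico hx hxy]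
    simp
  rcases le_total 0 y with hy | hy
  · rw [Ico_eq_empty_of_le hx, Ico_eq_empty_of_le hy, ← measureReal_Ico_add_measureReal_Ico hx hy]
    simp [add_comm]
  · rw [Ico_eq_empty_of_le hx, Ico_eq_empty_of_le hy, ← measureReal_Ico_add_measureReal_Ico hxy hy]
    simp

theorem monotone_icoCdf : Monotone μ.icoCdf := fun _ _ hxy ↦
  sub_nonneg.mp ((icoCdf_sub_icoCdf (μ := μ) hxy).symm ▸ measureReal_nonneg)

end MeasureTheory.Measure

section TranslationInvariant

variable {νL : Measure ℝ} (hT : ∀ s : Set ℝ, νL ((· + 1) ⁻¹' s) = νL s) {A : Set ℝ}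
  (hA : (· + 1) ⁻¹' A = A)
include hT hA

theorem measure_inter_Ico_add_one_add_one (a b : ℝ) :
    νL (A ∩ Ico (a + 1) (b + 1)) = νL (A ∩ Ico a b) := by
  rw [← hT, preimage_inter, hA, preimage_add_const_Ico, add_sub_cancel_right, add_sub_cancel_right]

theorem measure_inter_Ico_add_one_eq_Ico_zero_one (a : ℝ) :
    νL (A ∩ Ico a (a + 1)) = νL (A ∩ Ico 0 1) := by
  set F : ℝ → ENNReal := fun a ↦ νL (A ∩ Ico a (a + 1))
  have hF_periodic : Function.Periodic F 1 := fun a ↦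
    measure_inter_Ico_add_one_add_one hT hA a (a + 1)
  have hF_local {a b : ℝ} (hab : a ≤ b) (hb : b ≤ a + 1) : F b = F a := by
    simp only [F]
    rw [← measure_inter_Ico_add_measure_inter_Ico A hab hb,
      ← measure_inter_Ico_add_measure_inter_Ico A hb (by linarith : a + 1 ≤ b + 1),
      measure_inter_Ico_add_one_add_one hT hA, add_comm]
  have hfract : F (Int.fract a) = F a := by
    rw [← Int.self_sub_floor, ← mul_one (⌊a⌋ : ℝ), hF_periodic.sub_int_mul_eq]
  show F a = νL (A ∩ Ico 0 1)
  rw [← hfract, hF_local (Int.fract_nonneg a) (by linarith [Int.fract_lt_one a])]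
  simp [F]

end TranslationInvariant

namespace IsLift

variable {ν : Measure UnitAddCircle} {νL : Measure ℝ}

theorem map_restrict_Ico (h : IsLift ν νL) (a : ℝ) :
    (νL.restrict (Ico a (a + 1))).map ((↑) : ℝ → UnitAddCircle) = ν := by
  conv_rhs => rw [← h.2]
  ext S hS
  rw [Measure.map_apply AddCircle.measurable_mk' hS, Measure.map_apply AddCircle.measurable_mk' hS,
    Measure.restrict_apply (AddCircle.measurable_mk' hS),
    Measure.restrict_apply (AddCircle.measurable_mk' hS)]
  exact measure_inter_Ico_add_one_eq_Ico_zero_one h.1 (A := (↑) ⁻¹' S) (by ext; simp) a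

theorem measure_Ico_eq_measure_image (h : IsLift ν νL) {a b : ℝ} (hb : b ≤ a + 1) :
    νL (Ico a b) = ν ((↑) '' Ico a b) := by
  rw [← h.map_restrict_Ico a,
    Measure.map_apply AddCircle.measurable_mk' (UnitAddCircle.measurableSet_image_coe_Ico a b),
    Measure.restrict_apply' measurableSet_Ico, UnitAddCircle.preimage_image_coe_Ico_inter_Ico hb]

section Invariance

variable [NeZero ν] (h : IsLift ν νL) {f : CircleDeg1Lift} (hf : StrictMono f)
  {g : UnitAddCircle → UnitAddCircle} (hfg : Function.Semiconj ((↑) : ℝ → UnitAddCircle) f g)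
  (hinv : ν.map g = ν)
include h hf hfg hinv

theorem measure_Ico_map_of_le_add_one {a b : ℝ} (hb : b ≤ a + 1) :
    νL (Ico (f a) (f b)) = νL (Ico a b) := by
  have hfb : f b ≤ f a + 1 := by simpa using f.mono hb
  have hg : AEMeasurable g ν := .of_map_ne_zero (hinv.symm ▸ NeZero.ne ν)
  rw [h.measure_Ico_eq_measure_image hb, h.measure_Ico_eq_measure_image hfb,
    ← UnitAddCircle.preimage_image_coe_Ico_of_semiconj hf hfg a b,
    ← Measure.map_apply_of_aemeasurable hg (UnitAddCircle.measurableSet_image_coe_Ico _ _), hinv]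

theorem measure_Ico_map (a b : ℝ) : νL (Ico (f a) (f b)) = νL (Ico a b) := by
  obtain ⟨n, hn⟩ := exists_nat_ge (b - a)
  induction n generalizing a with
  | zero =>
    have hba : b ≤ a := by simpa [sub_nonpos] using hn
    rw [Ico_eq_empty_of_le hba, Ico_eq_empty_of_le (f.mono hba)]
  | succ n ih =>
    rcases le_or_gt b (a + 1) with hb | hb
    · exact h.measure_Ico_map_of_le_add_one hf hfg hinv hb
    · have ha : a ≤ a + 1 := by linarith
      rw [← measure_Ico_add_measure_Ico ha hb.le,
        ← measure_Ico_add_measure_Ico (f.mono ha) (f.mono hb.le),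
        h.measure_Ico_map_of_le_add_one hf hfg hinv le_rfl, ih (a + 1) (by push_cast at hn; linarith)]

end Invariance

variable [IsProbabilityMeasure ν]

theorem measure_Ico_add_one (h : IsLift ν νL) (a : ℝ) : νL (Ico a (a + 1)) = 1 := by
  rw [← Measure.restrict_apply_univ, ← measure_univ (μ := ν), ← h.map_restrict_Ico a,
    Measure.map_apply AddCircle.measurable_mk' MeasurableSet.univ, preimage_univ]

theorem isLocallyFiniteMeasure (h : IsLift ν νL) : IsLocallyFiniteMeasure νL :=
  ⟨fun x ↦ ⟨Ico (x - 1) (x + 1), Ico_mem_nhds (by linarith) (by linarith), by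
    have hleft := h.measure_Ico_add_one (x - 1)
    rw [sub_add_cancel] at hleft
    rw [← measure_Ico_add_measure_Ico (by linarith : x - 1 ≤ x) (by linarith : x ≤ x + 1), hleft,
      h.measure_Ico_add_one]
    simp⟩⟩

def cdfLift (h : IsLift ν νL) : CircleDeg1Lift where
  toFun := νL.icoCdf
  monotone' := by
    have := h.isLocallyFiniteMeasure
    exact Measure.monotone_icoCdf
  map_add_one' x := by
    have := h.isLocallyFiniteMeasure
    rw [← sub_eq_iff_eq_add', Measure.icoCdf_sub_icoCdf (by linarith), measureReal_def,
      h.measure_Ico_add_one, ENNReal.toReal_one]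

variable (h : IsLift ν νL) {f : CircleDeg1Lift} (hf : StrictMono f)
  {g : UnitAddCircle → UnitAddCircle} (hfg : Function.Semiconj ((↑) : ℝ → UnitAddCircle) f g)
  (hinv : ν.map g = ν)
include h hf hfg hinv

theorem icoCdf_map_sub_icoCdf (x y : ℝ) :
    νL.icoCdf (f y) - νL.icoCdf y = νL.icoCdf (f x) - νL.icoCdf x := by
  have := h.isLocallyFiniteMeasure
  wlog hxy : x ≤ y generalizing x y
  · exact (this y x (le_of_not_ge hxy)).symm
  have hmap := Measure.icoCdf_sub_icoCdf (μ := νL) (f.mono hxy)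
  rw [measureReal_def, h.measure_Ico_map hf hfg hinv, ← measureReal_def,
    ← Measure.icoCdf_sub_icoCdf hxy] at hmap
  linarith

theorem translationNumber_eq {x : ℝ} (hx : x ≤ f x) :
    f.translationNumber = νL.real (Ico x (f x)) := by
  have := h.isLocallyFiniteMeasure
  have hsemi : Function.Semiconj h.cdfLift f
      (CircleDeg1Lift.translate (Multiplicative.ofAdd (νL.real (Ico x (f x))))) := fun y ↦ by
    simp only [cdfLift, CircleDeg1Lift.coe_mk, OrderHom.coe_mk, CircleDeg1Lift.translate_apply,
      ← Measure.icoCdf_sub_icoCdf hx]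
    linarith [h.icoCdf_map_sub_icoCdf hf hfg hinv x y]
  rw [CircleDeg1Lift.translationNumber_eq_of_semiconj hsemi,
    CircleDeg1Lift.translationNumber_translate]

end IsLift

theorem stmt18_general (g : UnitAddCircle → UnitAddCircle) (gL : ℝ → ℝ)
    (hmono : StrictMono gL)
    (hper : ∀ y : ℝ, gL (y + 1) = gL y + 1)
    (hcomm : ∀ y : ℝ, ((gL y : ℝ) : UnitAddCircle) = g (y : UnitAddCircle))
    (hpos : ∀ x : ℝ, x < gL x)
    (ρ : ℝ) (hρ : Tendsto (fun n => gL^[n] 0 / n) atTop (𝓝 ρ))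
    (ν : Measure UnitAddCircle) [IsProbabilityMeasure ν]
    (hinv : Measure.map g ν = ν)
    (νL : Measure ℝ) (hlift : IsLift ν νL) :
    ∀ x : ℝ, (νL (Ico x (gL x))).toReal = ρ := by
  intro x
  let f : CircleDeg1Lift := ⟨⟨gL, hmono.monotone⟩, hper⟩
  have hρ_eq : f.translationNumber = ρ :=
    tendsto_nhds_unique f.tendsto_translation_number₀
      (by simpa [f, CircleDeg1Lift.coe_pow] using hρ)
  rw [← hρ_eq, hlift.translationNumber_eq (f := f) hmono hcomm hinv (hpos x).le, measureReal_def]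
  rfl

theorem stmt18 (g : UnitAddCircle → UnitAddCircle) (gL : ℝ → ℝ)
    (hmono : StrictMono gL) (hcont : Continuous gL)
    (hper : ∀ y : ℝ, gL (y + 1) = gL y + 1)
    (hcomm : ∀ y : ℝ, ((gL y : ℝ) : UnitAddCircle) = g (y : UnitAddCircle))
    (hpos : ∀ x : ℝ, x < gL x)
    (ρ : ℝ) (hρ : Tendsto (fun n => gL^[n] 0 / n) atTop (𝓝 ρ))
    (ν : Measure UnitAddCircle) [IsProbabilityMeasure ν]
    (hinv : Measure.map g ν = ν)
    (νL : Measure ℝ) (hlift : IsLift ν νL) :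
    ∀ x : ℝ, (νL (Ico x (gL x))).toReal = ρ :=
  stmt18_general g gL hmono hper hcomm hpos ρ hρ ν hinv νL hlift
end
end
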